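/- Let A be a Hermitian positive definite matrix on a finite set E, K := A(I+A)⁻¹, B := A⁻¹, and Λ ⊆ E. With K_Λ the compression of K to Λ, A_{[Λ]} := K_Λ(I_Λ − K_Λ)⁻¹ and B_{[Λ]} := (A_{[Λ]})⁻¹, one has B_{[Λ]} ≤ B_Λ in the Loewner order, where B_Λ is the principal submatrix of B indexed by Λ. -/

import Mathlib

/-!
For `M > 0` and an isometry `P` (`Pᴴ P = 1`), put `S = (Pᴴ M P)⁻¹` and `D = M⁻¹ P - P S`; then
`Dᴴ M D = Pᴴ M⁻¹ P - S ≥ 0`. Compressions to `Λ` are the case where `P` is the coordinate inclusion.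
With `K = A (1 + A)⁻¹ = (1 + A⁻¹)⁻¹` one has `B = K⁻¹ - 1` and `A_[Λ]⁻¹ = K_Λ⁻¹ - 1`, so
`B_Λ - B_[Λ] = (K⁻¹)_Λ - (K_Λ)⁻¹ ≥ 0`.
-/

open Matrix ComplexOrder

namespace Matrix

variable {m n : Type*} [Fintype n] [DecidableEq n]

section Algebra

variable {R : Type*} [CommRing R]

theorem inv_mul_inv_one_add {A : Matrix n n R} (hA : IsUnit A) (h1A : IsUnit (1 + A)) :
    (A * (1 + A)⁻¹)⁻¹ = 1 + A⁻¹ := by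
  rw [mul_inv_rev, nonsing_inv_nonsing_inv _ ((isUnit_iff_isUnit_det _).mp h1A), add_mul,
    one_mul, mul_nonsing_inv _ ((isUnit_iff_isUnit_det _).mp hA), add_comm]

theorem one_sub_mul_inv_one_add {A : Matrix n n R} (h1A : IsUnit (1 + A)) :
    1 - A * (1 + A)⁻¹ = (1 + A)⁻¹ := by
  calc 1 - A * (1 + A)⁻¹ = (1 + A - A) * (1 + A)⁻¹ := by
        rw [sub_mul, mul_nonsing_inv _ ((isUnit_iff_isUnit_det _).mp h1A)]
    _ = (1 + A)⁻¹ := by rw [add_sub_cancel_right, one_mul]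

theorem inv_mul_inv_one_sub {N : Matrix n n R} (hN : IsUnit N) (h1N : IsUnit (1 - N)) :
    (N * (1 - N)⁻¹)⁻¹ = N⁻¹ - 1 := by
  rw [mul_inv_rev, nonsing_inv_nonsing_inv _ ((isUnit_iff_isUnit_det _).mp h1N), sub_mul,
    one_mul, mul_nonsing_inv _ ((isUnit_iff_isUnit_det _).mp hN)]

end Algebra

theorem one_submatrix_conjTranspose_mul_mul {R : Type*} [Semiring R] [StarRing R]
    (e : m → n) (N : Matrix n n R) :
    ((1 : Matrix n n R).submatrix id e)ᴴ * N * (1 : Matrix n n R).submatrix id e =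
      N.submatrix e e := by
  ext i j
  simp [mul_apply, one_apply]

variable [Fintype m] [DecidableEq m] {K : Type*} [Field K] [PartialOrder K] [StarRing K]

theorem PosDef.posSemidef_conjTranspose_mul_inv_mul_sub_inv {M : Matrix n n K} (hM : M.PosDef)
    {P : Matrix n m K} (hP : Pᴴ * P = 1) :
    (Pᴴ * M⁻¹ * P - (Pᴴ * M * P)⁻¹).PosSemidef := by
  have hMP : (Pᴴ * M * P).PosDef := hM.conjTranspose_mul_mul_same fun x y hxy => by
    simpa [mulVec_mulVec, hP] using congrArg (Pᴴ *ᵥ ·) hxy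
  set S := (Pᴴ * M * P)⁻¹
  let _ := hM.isUnit.invertible
  let _ := hMP.isUnit.invertible
  have hexpand : (M⁻¹ * P - P * S)ᴴ * M * (M⁻¹ * P - P * S) = Pᴴ * M⁻¹ * P - S := by
    have hSH : Sᴴ = S := hMP.inv.isHermitian
    have hMH : M⁻¹ᴴ = M⁻¹ := hM.inv.isHermitian
    have hSS : S * (Pᴴ * (M * (P * S))) = S := by
      calc S * (Pᴴ * (M * (P * S))) = S * (Pᴴ * M * P * S) := by simp only [Matrix.mul_assoc]
        _ = S := inv_mul_cancel_left_of_invertible (A := Pᴴ * M * P) S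
    simp only [conjTranspose_sub, conjTranspose_mul, hSH, hMH, Matrix.sub_mul, Matrix.mul_sub,
      Matrix.mul_assoc, mul_inv_cancel_left_of_invertible, inv_mul_cancel_left_of_invertible]
    rw [← Matrix.mul_assoc Pᴴ P S, hP, Matrix.one_mul, Matrix.mul_one, hSS, sub_self, sub_zero]
  simpa only [hexpand] using hM.posSemidef.conjTranspose_mul_mul_same (M⁻¹ * P - P * S)

theorem PosDef.posSemidef_inv_submatrix_sub_inv_submatrix {M : Matrix n n K} (hM : M.PosDef)
    {e : m → n} (he : Function.Injective e) :
    (M⁻¹.submatrix e e - (M.submatrix e e)⁻¹).PosSemidef := by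
  simpa only [one_submatrix_conjTranspose_mul_mul] using
    hM.posSemidef_conjTranspose_mul_inv_mul_sub_inv (P := (1 : Matrix n n K).submatrix id e)
      (by simpa only [Matrix.mul_one, submatrix_one e he] using
        one_submatrix_conjTranspose_mul_mul e (1 : Matrix n n K))

end Matrix

theorem stmt_8 {E : Type*} [Fintype E] [DecidableEq E]
    (A : Matrix E E ℂ) (hA : A.PosDef)
    (Λ : Finset E)
    (K B : Matrix E E ℂ) (hK : K = A * (1 + A)⁻¹) (hB : B = A⁻¹)
    (KΛ BΛ : Matrix ↥Λ ↥Λ ℂ)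
    (hKΛ : KΛ = K.submatrix (fun i : ↥Λ => (i : E)) (fun i : ↥Λ => (i : E)))
    (hBΛ : BΛ = B.submatrix (fun i : ↥Λ => (i : E)) (fun i : ↥Λ => (i : E))) :
    (BΛ - (KΛ * (1 - KΛ)⁻¹)⁻¹).PosSemidef := by
  subst hB hKΛ hBΛ
  have h1A : (1 + A).PosDef := PosDef.one.add hA
  have hKinv : K⁻¹ = 1 + A⁻¹ := hK ▸ inv_mul_inv_one_add hA.isUnit h1A.isUnit
  have hKpos : K.PosDef := by
    rw [← posDef_inv_iff, hKinv]
    exact PosDef.one.add hA.inv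
  have h1Kpos : (1 - K).PosDef := by
    rw [hK, one_sub_mul_inv_one_add h1A.isUnit]
    exact h1A.inv
  have he : Function.Injective (fun i : ↥Λ => (i : E)) := Subtype.val_injective
  have h1KΛ := h1Kpos.submatrix he
  simp only [submatrix_sub, Pi.sub_apply, submatrix_one _ he] at h1KΛ
  have hAinv : A⁻¹ = K⁻¹ - 1 := by rw [hKinv, add_sub_cancel_left]
  rw [inv_mul_inv_one_sub (hKpos.submatrix he).isUnit h1KΛ.isUnit, hAinv]
  simp only [submatrix_sub, Pi.sub_apply, submatrix_one _ he, sub_sub_sub_cancel_right]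
  exact hKpos.posSemidef_inv_submatrix_sub_inv_submatrix he
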